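/- Assume (n−1)/2 is an odd positive integer, ω₀ is an odd integer with ω₀ ≤ −(n−1)/2, σ ∈ ℝ, γ̃ = (n−1)/2, and μ : (−r₀', r₀') → ℝ is a smooth even function (some 0 < r₀' ≤ −r₀) with μ(0) = 0 and μ(r) = μ̃(log(−r)) for −r₀' < r < 0. Then all the exponents 2γ̃−(n−1), 2γ̃+2, 2γ̃, 2(γ̃+1−(n+ω₀)) and 2γ̃+2−(n+ω₀) occurring in Φ are even nonnegative integers, and Φ extends to a smooth even function on (−r₀', r₀') whose value at 0 is m + (κ²/n²)·ρ₀² if ω₀ = −(n−1)/2 and m if ω₀ < −(n−1)/2; in particular the extension is positive near 0. -/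
import Mathlib



/-- If `(n-1)/2` is an odd positive integer, `ω₀` is an odd integer with
`ω₀ ≤ -(n-1)/2`, `γ = (n-1)/2`, and `μ` is a smooth even extension of
`μ̃(log(-r))`, then all exponents occurring in `Φ` are even nonnegative integers and
`Φ` extends to a smooth even function on `(-r₀', r₀')` whose value at `0` is
`m + (κ²/n²)ρ₀²` if `ω₀ = -(n-1)/2` and `m` if `ω₀ < -(n-1)/2`; in particular the
extension is positive near `0`. -/
theorem Phi_even_extension
    (n : ℕ) (hn : 3 ≤ n)
    (m Λ κt κ σ ω₀ ρ₀ γ r₀ : ℝ)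
    (hm : 0 < m) (hΛ : Λ ≤ 0)
    (hκt : κt = -1 ∨ κt = 0 ∨ κt = 1) (hΛκt : Λ = 0 → κt = 1)
    (hκ : κ ≠ 0) (hρ₀ : 0 < ρ₀) (hγ0 : 0 < γ) (hr₀ : r₀ < 0)
    (lam μt : ℝ → ℝ)
    (hlam : ContDiff ℝ (⊤ : ℕ∞) lam)
    (hlam0 : Filter.Tendsto lam Filter.atBot (nhds 0))
    (hμt : ∀ t : ℝ, HasDerivAt μt (lam t) t)
    (hμt0 : Filter.Tendsto μt Filter.atBot (nhds 0))
    (θ Φ G : ℝ → ℝ)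
    (hθ : ∀ r < (0:ℝ), θ r
      = m + 2 * Λ / ((n : ℝ) * ((n : ℝ) + 1)) * (-r) ^ ((n : ℝ) + 1)
        - κt * (-r) ^ ((n : ℝ) - 1))
    (hΦ : ∀ r < (0:ℝ), Φ r
      = m * (-r) ^ (2 * γ - ((n : ℝ) - 1))
        + 2 * Λ / ((n : ℝ) * ((n : ℝ) + 1)) * (-r) ^ (2 * γ + 2)
        - κt * (-r) ^ (2 * γ)
        + κ ^ 2 / (n : ℝ) ^ 2
          * (ρ₀ ^ 2 * (-r) ^ (2 * (γ + 1 - ((n : ℝ) + ω₀)))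
               * Real.exp (-2 * μt (Real.log (-r)))
             + 2 * σ * ρ₀ * (-r) ^ (2 * γ + 2 - ((n : ℝ) + ω₀))
               * Real.exp (-μt (Real.log (-r)))
             + σ ^ 2 * (-r) ^ (2 * γ + 2)))
    (hG : ∀ r < (0:ℝ), G r
      = -(κ / (n : ℝ))
          * (σ * (-r) ^ ((n : ℝ) + γ)
             + ρ₀ * (-r) ^ (γ - ω₀) * Real.exp (-μt (Real.log (-r))))
          / (θ r * Real.sqrt (Φ r)))
    (r₀' : ℝ) (hr₀'0 : 0 < r₀') (hr₀' : r₀' ≤ -r₀)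
    (μ : ℝ → ℝ)
    (hμs : ContDiffOn ℝ (⊤ : ℕ∞) μ (Set.Ioo (-r₀') r₀'))
    (hμeven : ∀ r ∈ Set.Ioo (-r₀') r₀', μ (-r) = μ r)
    (hμ0 : μ 0 = 0)
    (hμeq : ∀ r : ℝ, -r₀' < r → r < 0 → μ r = μt (Real.log (-r)))
    (hhalf : ∃ j : ℕ, Odd j ∧ 0 < j ∧ ((n : ℝ) - 1) / 2 = (j : ℝ))
    (hω₀odd : ∃ z : ℤ, Odd z ∧ ω₀ = (z : ℝ))
    (hω₀le : ω₀ ≤ -((n : ℝ) - 1) / 2)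
    (hγ : γ = ((n : ℝ) - 1) / 2) :
    ((∃ j : ℕ, 2 * γ - ((n : ℝ) - 1) = 2 * (j : ℝ))
      ∧ (∃ j : ℕ, 2 * γ + 2 = 2 * (j : ℝ))
      ∧ (∃ j : ℕ, 2 * γ = 2 * (j : ℝ))
      ∧ (∃ j : ℕ, 2 * (γ + 1 - ((n : ℝ) + ω₀)) = 2 * (j : ℝ))
      ∧ (∃ j : ℕ, Even j ∧ 2 * γ + 2 - ((n : ℝ) + ω₀) = (j : ℝ)))
    ∧ ∃ Ψ : ℝ → ℝ,
        ContDiffOn ℝ (⊤ : ℕ∞) Ψ (Set.Ioo (-r₀') r₀')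
        ∧ (∀ r ∈ Set.Ioo (-r₀') r₀', Ψ (-r) = Ψ r)
        ∧ (∀ r : ℝ, -r₀' < r → r < 0 → Ψ r = Φ r)
        ∧ (ω₀ = -((n : ℝ) - 1) / 2 → Ψ 0 = m + κ ^ 2 / (n : ℝ) ^ 2 * ρ₀ ^ 2)
        ∧ (ω₀ < -((n : ℝ) - 1) / 2 → Ψ 0 = m)
        ∧ ∃ ε : ℝ, 0 < ε ∧ ∀ r ∈ Set.Ioo (-ε) ε, 0 < Ψ r := by

  obtain ⟨j, hjodd, hjpos, hj⟩ := hhalf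
  obtain ⟨z, hzodd, hz⟩ := hω₀odd
  have hnR : (n : ℝ) = 2 * (j : ℝ) + 1 := by linarith
  have hnnat : n = 2 * j + 1 := by exact_mod_cast (show (n:ℝ) = ((2*j+1 : ℕ) : ℝ) by push_cast; linarith)
  have hγj : γ = (j : ℝ) := by rw [hγ, hj]
  have hzR : (z : ℝ) ≤ -(j : ℝ) := by rw [← hz]; linarith
  have hzj : z ≤ -(j : ℤ) := by exact_mod_cast hzR
  set q : ℕ := (-(j:ℤ) - z).toNat with hqdef
  have hqz : (q : ℤ) = -(j:ℤ) - z := Int.toNat_of_nonneg (by omega)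
  have hqR : (q : ℝ) = -(j : ℝ) - (z : ℝ) := by exact_mod_cast hqz
  set k₅ : ℕ := (1 - z).toNat with hk₅def
  have hjpos' : (1:ℤ) ≤ (j:ℤ) := by exact_mod_cast hjpos
  have hk₅z : (k₅ : ℤ) = 1 - z := Int.toNat_of_nonneg (by omega)
  have hk₅R : (k₅ : ℝ) = 1 - (z : ℝ) := by exact_mod_cast hk₅z
  obtain ⟨c, hc⟩ := hzodd
  have hevk₅ : Even k₅ := by
    rw [← Int.even_coe_nat, hk₅z]; exact ⟨-c, by omega⟩
  have hk₅ne : k₅ ≠ 0 := by omega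
  have hev1 : Even (n + 1) := ⟨j + 1, by omega⟩
  have hev2 : Even (n - 1) := ⟨j, by omega⟩
  have hevq : Even (2 * q) := even_two_mul q
  -- exponent identities
  have e0 : 2 * γ - ((n : ℝ) - 1) = 0 := by rw [hγ]; ring
  have e1 : 2 * γ + 2 = ((n + 1 : ℕ) : ℝ) := by push_cast; linarith
  have e2 : 2 * γ = ((n - 1 : ℕ) : ℝ) := by
    have h : n - 1 = 2 * j := by omega
    rw [h]; push_cast; linarith
  have e3 : 2 * (γ + 1 - ((n : ℝ) + ω₀)) = ((2 * q : ℕ) : ℝ) := by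
    push_cast; rw [hz]; linarith
  have e4 : 2 * γ + 2 - ((n : ℝ) + ω₀) = ((k₅ : ℕ) : ℝ) := by
    rw [hk₅R, hz]; linarith
  constructor
  · refine ⟨⟨0, by rw [e0]; norm_num⟩, ⟨j + 1, by rw [e1]; push_cast; linarith⟩,
      ⟨j, by rw [hγj]⟩, ⟨q, by rw [e3]; push_cast; ring⟩, ⟨k₅, hevk₅, e4⟩⟩
  set S := Set.Ioo (-r₀') r₀' with hSdef
  refine ⟨fun r => m + 2 * Λ / ((n : ℝ) * ((n : ℝ) + 1)) * r ^ (n + 1)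
      - κt * r ^ (n - 1)
      + κ ^ 2 / (n : ℝ) ^ 2
        * (ρ₀ ^ 2 * r ^ (2 * q) * Real.exp (-2 * μ r)
           + 2 * σ * ρ₀ * r ^ k₅ * Real.exp (-(μ r))
           + σ ^ 2 * r ^ (n + 1)), ?_, ?_, ?_, ?_, ?_, ?_⟩
  · have hpow : ∀ k : ℕ, ContDiffOn ℝ (⊤ : ℕ∞) (fun r : ℝ => r ^ k) S :=
      fun k => (contDiff_id.pow k).contDiffOn
    have hexp1 : ContDiffOn ℝ (⊤ : ℕ∞) (fun r => Real.exp (-2 * μ r)) S :=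
      Real.contDiff_exp.comp_contDiffOn (contDiffOn_const.mul hμs)
    have hexp2 : ContDiffOn ℝ (⊤ : ℕ∞) (fun r => Real.exp (-(μ r))) S :=
      Real.contDiff_exp.comp_contDiffOn hμs.neg
    exact ((contDiffOn_const.add (contDiffOn_const.mul (hpow (n+1)))).sub
        (contDiffOn_const.mul (hpow (n-1)))).add
      (contDiffOn_const.mul
        ((((contDiffOn_const.mul (hpow (2*q))).mul hexp1).add
          ((contDiffOn_const.mul (hpow k₅)).mul hexp2)).add
          (contDiffOn_const.mul (hpow (n+1)))))
  · intro r hr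
    simp only [hμeven r hr, hev1.neg_pow, hev2.neg_pow, hevq.neg_pow, hevk₅.neg_pow]
  · intro r hr1 hr2
    rw [hΦ r hr2, ← hμeq r hr1 hr2, e0, e3, e4, e1, e2, Real.rpow_zero,
      Real.rpow_natCast, Real.rpow_natCast, Real.rpow_natCast, Real.rpow_natCast,
      hev1.neg_pow, hev2.neg_pow, hevq.neg_pow, hevk₅.neg_pow]
    ring
  · intro hω₀eq
    have hzeq : z = -(j:ℤ) := by
      have : (z : ℝ) = -(j : ℝ) := by rw [← hz, hω₀eq]; linarith
      exact_mod_cast this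
    have hq0 : q = 0 := by omega
    have h1 : (0:ℝ) ^ (n + 1) = 0 := zero_pow (by omega)
    have h2 : (0:ℝ) ^ (n - 1) = 0 := zero_pow (by omega)
    have h3 : (0:ℝ) ^ k₅ = 0 := zero_pow hk₅ne
    simp only [hq0, mul_zero, pow_zero, h1, h2, h3, hμ0, neg_zero, Real.exp_zero]
    ring
  · intro hω₀lt
    have hzlt : z < -(j:ℤ) := by
      have : (z : ℝ) < -(j : ℝ) := by rw [← hz]; linarith
      exact_mod_cast this
    have hqne : 2 * q ≠ 0 := by omega
    have h1 : (0:ℝ) ^ (n + 1) = 0 := zero_pow (by omega)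
    have h2 : (0:ℝ) ^ (n - 1) = 0 := zero_pow (by omega)
    have h3 : (0:ℝ) ^ k₅ = 0 := zero_pow hk₅ne
    have h4 : (0:ℝ) ^ (2 * q) = 0 := zero_pow hqne
    simp only [h1, h2, h3, h4, hμ0, neg_zero, Real.exp_zero]
    ring
  · set Ψ : ℝ → ℝ := fun r => m + 2 * Λ / ((n : ℝ) * ((n : ℝ) + 1)) * r ^ (n + 1)
      - κt * r ^ (n - 1)
      + κ ^ 2 / (n : ℝ) ^ 2
        * (ρ₀ ^ 2 * r ^ (2 * q) * Real.exp (-2 * μ r)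
           + 2 * σ * ρ₀ * r ^ k₅ * Real.exp (-(μ r))
           + σ ^ 2 * r ^ (n + 1)) with hΨdef
    show ∃ ε : ℝ, 0 < ε ∧ ∀ r ∈ Set.Ioo (-ε) ε, 0 < Ψ r
    have hpow : ∀ k : ℕ, ContDiffOn ℝ (⊤ : ℕ∞) (fun r : ℝ => r ^ k) S :=
      fun k => (contDiff_id.pow k).contDiffOn
    have hexp1 : ContDiffOn ℝ (⊤ : ℕ∞) (fun r => Real.exp (-2 * μ r)) S :=
      Real.contDiff_exp.comp_contDiffOn (contDiffOn_const.mul hμs)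
    have hexp2 : ContDiffOn ℝ (⊤ : ℕ∞) (fun r => Real.exp (-(μ r))) S :=
      Real.contDiff_exp.comp_contDiffOn hμs.neg
    have hΨs : ContDiffOn ℝ (⊤ : ℕ∞) Ψ S :=
      ((contDiffOn_const.add (contDiffOn_const.mul (hpow (n+1)))).sub
        (contDiffOn_const.mul (hpow (n-1)))).add
      (contDiffOn_const.mul
        ((((contDiffOn_const.mul (hpow (2*q))).mul hexp1).add
          ((contDiffOn_const.mul (hpow k₅)).mul hexp2)).add
          (contDiffOn_const.mul (hpow (n+1)))))
    have h0S : (0:ℝ) ∈ S := ⟨by linarith, hr₀'0⟩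
    have hca : ContinuousAt Ψ 0 :=
      (hΨs.continuousOn.continuousAt (isOpen_Ioo.mem_nhds h0S))
    have h1 : (0:ℝ) ^ (n + 1) = 0 := zero_pow (by omega)
    have h2 : (0:ℝ) ^ (n - 1) = 0 := zero_pow (by omega)
    have h3 : (0:ℝ) ^ k₅ = 0 := zero_pow hk₅ne
    have hΨ0 : Ψ 0 = m + κ ^ 2 / (n : ℝ) ^ 2 * (ρ₀ ^ 2 * (0:ℝ) ^ (2 * q)) := by
      simp only [hΨdef, h1, h2, h3, hμ0, mul_zero, neg_zero, Real.exp_zero]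
      ring
    have hpos0 : 0 < Ψ 0 := by
      rw [hΨ0]
      have hnn : 0 ≤ κ ^ 2 / (n : ℝ) ^ 2 * (ρ₀ ^ 2 * (0:ℝ) ^ (2 * q)) :=
        mul_nonneg (div_nonneg (sq_nonneg κ) (sq_nonneg _))
          (mul_nonneg (sq_nonneg ρ₀) (pow_nonneg le_rfl _))
      linarith
    have hev : ∀ᶠ r in nhds (0:ℝ), 0 < Ψ r := hca.eventually (eventually_gt_nhds hpos0)
    rw [Metric.eventually_nhds_iff] at hev
    obtain ⟨ε, hε, h⟩ := hev
    refine ⟨ε, hε, fun r hr => h ?_⟩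
    rw [Real.dist_eq, sub_zero, abs_lt]
    exact ⟨hr.1, hr.2⟩
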